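/- arXiv:1212.3665 — 3 statements merged into one kernel-verified Lean document; each statement's English description precedes it below -/
import Mathlib

section
/- Let W be a nonzero finite-dimensional complex inner product space, A a self-adjoint linear endomorphism of W, and w ∈ W a nonzero vector. Then the function t ↦ log ‖exp(tA) w‖² is convex on ℝ. -/
/-!
Write `v t = exp (t • A) w`, so that `v' = A v`. The function `g = ‖v‖²` has `g' = 2 re ⟪A v, v⟫`
and, by self-adjointness, `g'' = 4 ‖A v‖²`. Then `(log g)'' = (g g'' - g'²) / g²`, and
`g'² ≤ g g''` is the Cauchy–Schwarz inequality `(re ⟪A v, v⟫)² ≤ ‖A v‖² ‖v‖²`.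
-/

open scoped InnerProductSpace
open Set RCLike

theorem convexOn_log_of_deriv_sq_le_mul_deriv2 {g g' g'' : ℝ → ℝ} (hpos : ∀ t, 0 < g t)
    (hg : ∀ t, HasDerivAt g (g' t) t) (hg' : ∀ t, HasDerivAt g' (g'' t) t)
    (hle : ∀ t, g' t ^ 2 ≤ g t * g'' t) :
    ConvexOn ℝ univ (fun t => Real.log (g t)) := by
  have hlog : ∀ t, HasDerivAt (fun s => Real.log (g s)) (g' t / g t) t :=
    fun t => (hg t).log (hpos t).ne'
  refine convexOn_of_hasDerivWithinAt2_nonneg convex_univ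
    (fun t _ => (hlog t).continuousAt.continuousWithinAt) (fun t _ => (hlog t).hasDerivWithinAt)
    (fun t _ => ((hg' t).div (hg t) (hpos t).ne').hasDerivWithinAt) fun t _ => ?_
  have := hle t
  exact div_nonneg (by nlinarith) (sq_nonneg _)

section RCLike

variable {𝕜 E : Type*} [RCLike 𝕜] [NormedAddCommGroup E] [InnerProductSpace 𝕜 E]
  [NormedSpace ℝ E]

theorem HasDerivAt.re_inner {f g : ℝ → E} {f' g' : E} {t : ℝ} (hf : HasDerivAt f f' t)
    (hg : HasDerivAt g g' t) :
    HasDerivAt (fun s => re ⟪f s, g s⟫_𝕜) (re ⟪f t, g'⟫_𝕜 + re ⟪f', g t⟫_𝕜) t :=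
  ((reCLM (K := 𝕜)).hasFDerivAt.comp_hasDerivAt t (hf.inner 𝕜 hg)).congr_deriv (map_add _ _ _)

theorem HasDerivAt.norm_sq_eq_two_mul_re_inner {v : ℝ → E} {v' : E} {t : ℝ}
    (hv : HasDerivAt v v' t) :
    HasDerivAt (fun s => ‖v s‖ ^ 2) (2 * re ⟪v', v t⟫_𝕜) t := by
  have := hv.re_inner (𝕜 := 𝕜) hv
  simp only [inner_self_eq_norm_sq] at this
  refine this.congr_deriv ?_
  rw [inner_re_symm (𝕜 := 𝕜) (v t)]
  ring

theorem hasDerivAt_re_inner_apply_self [IsScalarTower ℝ 𝕜 E] {A : E →L[𝕜] E}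
    (hA : (A : E →ₗ[𝕜] E).IsSymmetric) {v : ℝ → E} {t : ℝ} (hv : HasDerivAt v (A (v t)) t) :
    HasDerivAt (fun s => re ⟪A (v s), v s⟫_𝕜) (2 * ‖A (v t)‖ ^ 2) t := by
  have hsymm : ⟪A (A (v t)), v t⟫_𝕜 = ⟪A (v t), A (v t)⟫_𝕜 := hA _ _
  refine (((A.restrictScalars ℝ).hasFDerivAt.comp_hasDerivAt t hv).re_inner (𝕜 := 𝕜)
    hv).congr_deriv ?_
  change re ⟪A (v t), A (v t)⟫_𝕜 + re ⟪A (A (v t)), v t⟫_𝕜 = _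
  rw [hsymm, inner_self_eq_norm_sq]
  ring

theorem convexOn_log_norm_sq_of_hasDerivAt_eq_apply [IsScalarTower ℝ 𝕜 E] {A : E →L[𝕜] E}
    (hA : (A : E →ₗ[𝕜] E).IsSymmetric) {v : ℝ → E} (hv : ∀ t, HasDerivAt v (A (v t)) t)
    (hv0 : ∀ t, v t ≠ 0) :
    ConvexOn ℝ univ (fun t => Real.log (‖v t‖ ^ 2)) := by
  refine convexOn_log_of_deriv_sq_le_mul_deriv2 (fun t => pow_pos (norm_pos_iff.2 (hv0 t)) 2)
    (fun t => (hv t).norm_sq_eq_two_mul_re_inner (𝕜 := 𝕜))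
    (fun t => (hasDerivAt_re_inner_apply_self hA (hv t)).const_mul 2) fun t => ?_
  have hcs : |re ⟪A (v t), v t⟫_𝕜| ≤ ‖A (v t)‖ * ‖v t‖ :=
    (abs_re_le_norm _).trans (norm_inner_le_norm _ _)
  have hcs_sq := pow_le_pow_left₀ (abs_nonneg _) hcs 2
  rw [sq_abs] at hcs_sq
  nlinarith

end RCLike

section Exp

variable {E : Type*} [NormedAddCommGroup E] [NormedSpace ℂ E] [CompleteSpace E]

theorem hasDerivAt_exp_smul_apply (A : E →L[ℂ] E) (w : E) (t : ℝ) :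
    HasDerivAt (fun s : ℝ => NormedSpace.exp (s • A) w) (A (NormedSpace.exp (t • A) w)) t :=
  ((ContinuousLinearMap.apply ℂ E w).restrictScalars ℝ).hasFDerivAt.comp_hasDerivAt t
    (hasDerivAt_exp_smul_const' A t)

theorem exp_smul_apply_ne_zero (A : E →L[ℂ] E) (t : ℝ) {w : E} (hw : w ≠ 0) :
    NormedSpace.exp (t • A) w ≠ 0 := by
  obtain ⟨B, hB⟩ := (NormedSpace.isUnit_exp_of_mem_ball (𝕂 := ℝ) (x := t • A)
    ((NormedSpace.expSeries_radius_eq_top ℝ (E →L[ℂ] E)).symm ▸ edist_lt_top _ _)).exists_left_inv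
  intro h
  have hBw := congrArg (fun C : E →L[ℂ] E => C w) hB
  simp only [mul_apply_eq_comp, h, map_zero, one_apply_eq_self] at hBw
  exact hw hBw.symm

end Exp

open scoped ComplexInnerProductSpace

theorem stmt_0_general
    (W : Type*) [NormedAddCommGroup W] [InnerProductSpace ℂ W]
    [FiniteDimensional ℂ W]
    (A : W →L[ℂ] W)
    (hA : ∀ x y : W, ⟪A x, y⟫ = ⟪x, A y⟫)
    (w : W) (hw : w ≠ 0) :
    ConvexOn ℝ Set.univ
      (fun t : ℝ => Real.log (‖(NormedSpace.exp (t • A)) w‖ ^ 2)) :=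
  convexOn_log_norm_sq_of_hasDerivAt_eq_apply hA (hasDerivAt_exp_smul_apply A w)
    (fun t => exp_smul_apply_ne_zero A t hw)

theorem stmt_0
    (W : Type*) [NormedAddCommGroup W] [InnerProductSpace ℂ W]
    [FiniteDimensional ℂ W] [Nontrivial W]
    (A : W →L[ℂ] W)
    (hA : ∀ x y : W, ⟪A x, y⟫ = ⟪x, A y⟫)
    (w : W) (hw : w ≠ 0) :
    ConvexOn ℝ Set.univ
      (fun t : ℝ => Real.log (‖(NormedSpace.exp (t • A)) w‖ ^ 2)) :=
  stmt_0_general W A hA w hw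
end

section
/- Let W be a nonzero finite-dimensional complex inner product space, A a self-adjoint linear endomorphism of W, and w ∈ W a nonzero vector. Then the function f(t) = log ‖exp(tA) w‖² is affine on ℝ (i.e. there exist real α, β with f(t) = αt + β for all t) if and only if w is an eigenvector of A. -/
/-!
Expand `w = ∑ cᵢ bᵢ` in an orthonormal eigenbasis of `A` with real eigenvalues `λᵢ`; then
`‖exp (tA) w‖² = ∑ |cᵢ|² e^{2λᵢt}`. If the logarithm of this is `αt + β`, every nonzero term
satisfies `|cᵢ|² e^{2λᵢt} ≤ e^{αt+β}` for all real `t`, and letting `t → ±∞` forces `2λᵢ = α`;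
so `w` lies in the `α/2`-eigenspace. Conversely, for `A w = μ w` one has
`‖exp (tA) w‖ = e^{t Re μ} ‖w‖`.
-/

open scoped ComplexInnerProductSpace

section

variable {𝕜 E : Type*} [RCLike 𝕜] [NormedAddCommGroup E] [InnerProductSpace 𝕜 E]

open scoped InnerProductSpace

theorem NormedSpace.exp_apply_of_apply_eq_smul [CompleteSpace E] {B : E →L[𝕜] E} {μ : 𝕜} {v : E}
    (h : B v = μ • v) : exp B v = exp μ • v := by
  have hpow (n : ℕ) : (B ^ n) v = μ ^ n • v := by
    induction n with
    | zero => simp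
    | succ n ih =>
      rw [pow_succ, pow_succ', mul_smul, ← ih, ← map_smul, ← h]
      rfl
  refine ((ContinuousLinearMap.apply 𝕜 E v).hasSum (exp_series_hasSum_exp' (𝕂 := 𝕜) B)).unique ?_
  convert (exp_series_hasSum_exp' (𝕂 := 𝕜) μ).smul_const v using 1
  ext n
  simp [hpow, smul_smul]

namespace OrthonormalBasis

variable {ι : Type*} [Fintype ι] (b : OrthonormalBasis ι 𝕜 E) {f : E →L[𝕜] E} {μ : ι → 𝕜}

theorem inner_apply_of_apply_eq_smul (hf : ∀ i, f (b i) = μ i • b i) (v : E) (i : ι) :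
    ⟪b i, f v⟫_𝕜 = μ i * ⟪b i, v⟫_𝕜 := by
  conv_lhs => rw [← b.sum_repr' v]
  simp only [map_sum, map_smul, hf, smul_smul]
  rw [b.orthonormal.inner_right_sum _ (Finset.mem_univ i), mul_comm]

theorem apply_eq_smul_of_inner_ne_zero (hf : ∀ i, f (b i) = μ i • b i) {v : E} {c : 𝕜}
    (hv : ∀ i, ⟪b i, v⟫_𝕜 ≠ 0 → μ i = c) : f v = c • v := by
  refine InnerProductSpace.ext_inner_left_basis b.toBasis fun i => ?_
  rw [b.coe_toBasis, inner_apply_of_apply_eq_smul b hf, inner_smul_right]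
  by_cases hi : ⟪b i, v⟫_𝕜 = 0
  · simp [hi]
  · rw [hv i hi]

end OrthonormalBasis

end

theorem eq_of_forall_mul_exp_le {a s α β : ℝ} {f : ℝ → ℝ} (ha : 0 < a)
    (hle : ∀ t, a * Real.exp (s * t) ≤ f t) (hf : ∀ t, Real.log (f t) = α * t + β) : s = α := by
  have hlin (t : ℝ) : (s - α) * t ≤ β - Real.log a := by
    have := Real.log_le_log (by positivity) (hle t)
    rw [Real.log_mul ha.ne' (Real.exp_pos _).ne', Real.log_exp, hf] at this
    linarith
  by_contra hne
  have := hlin ((β - Real.log a + 1) / (s - α))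
  rw [mul_div_cancel₀ _ (sub_ne_zero.mpr hne)] at this
  linarith

section

variable {E : Type*} [NormedAddCommGroup E] [InnerProductSpace ℂ E] [CompleteSpace E]

theorem NormedSpace.exp_smul_apply_of_apply_eq_smul {B : E →L[ℂ] E} {μ : ℂ} {v : E}
    (h : B v = μ • v) (t : ℝ) : exp (t • B) v = exp (t • μ) • v :=
  exp_apply_of_apply_eq_smul (by rw [smul_apply, h, smul_assoc])

theorem norm_exp_real_smul (t : ℝ) (μ : ℂ) : ‖NormedSpace.exp (t • μ)‖ = Real.exp (t * μ.re) := by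
  rw [← Complex.exp_eq_exp_ℂ, Complex.norm_exp, Complex.smul_re, smul_eq_mul]

theorem log_norm_sq_exp_smul_apply_of_apply_eq_smul {B : E →L[ℂ] E} {μ : ℂ} {v : E}
    (h : B v = μ • v) (hv : v ≠ 0) (t : ℝ) :
    Real.log (‖NormedSpace.exp (t • B) v‖ ^ 2) = 2 * μ.re * t + Real.log (‖v‖ ^ 2) := by
  rw [NormedSpace.exp_smul_apply_of_apply_eq_smul h, norm_smul, mul_pow, norm_exp_real_smul,
    Real.log_mul (by positivity) (by positivity), ← Real.exp_nat_mul, Real.log_exp]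
  ring

theorem OrthonormalBasis.norm_sq_exp_smul_apply {ι : Type*} [Fintype ι]
    (b : OrthonormalBasis ι ℂ E) {A : E →L[ℂ] E} {ev : ι → ℝ} (hA : ∀ i, A (b i) = (ev i : ℂ) • b i)
    (t : ℝ) (w : E) :
    ‖NormedSpace.exp (t • A) w‖ ^ 2 = ∑ i, ‖⟪b i, w⟫‖ ^ 2 * Real.exp (2 * ev i * t) := by
  have hexp (i : ι) := NormedSpace.exp_smul_apply_of_apply_eq_smul (hA i) t
  rw [← b.sum_sq_norm_inner_right]
  refine Finset.sum_congr rfl fun i _ => ?_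
  rw [b.inner_apply_of_apply_eq_smul hexp, norm_mul, mul_pow, norm_exp_real_smul, mul_comm,
    ← Real.exp_nat_mul, Complex.ofReal_re]
  congr 2
  push_cast
  ring

end

theorem stmt_1_general
    (W : Type*) [NormedAddCommGroup W] [InnerProductSpace ℂ W]
    [FiniteDimensional ℂ W]
    (A : W →L[ℂ] W)
    (hA : ∀ x y : W, ⟪A x, y⟫ = ⟪x, A y⟫)
    (w : W) (hw : w ≠ 0) :
    (∃ α β : ℝ, ∀ t : ℝ,
        Real.log (‖(NormedSpace.exp (t • A)) w‖ ^ 2) = α * t + β) ↔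
      ∃ μ : ℂ, A w = μ • w := by
  have hT : (A : W →ₗ[ℂ] W).IsSymmetric := hA
  obtain ⟨b, ev, hb⟩ : ∃ (b : OrthonormalBasis _ ℂ W) (ev : _ → ℝ), ∀ i, A (b i) = (ev i : ℂ) • b i :=
    ⟨_, _, hT.apply_eigenvectorBasis rfl⟩
  constructor
  · rintro ⟨α, β, hf⟩
    refine ⟨(α / 2 : ℝ), b.apply_eq_smul_of_inner_ne_zero hb fun i hi => ?_⟩
    have hle (t : ℝ) :
        ‖⟪b i, w⟫‖ ^ 2 * Real.exp (2 * ev i * t) ≤ ‖NormedSpace.exp (t • A) w‖ ^ 2 := by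
      rw [b.norm_sq_exp_smul_apply hb]
      exact Finset.single_le_sum (f := fun j => ‖⟪b j, w⟫‖ ^ 2 * Real.exp (2 * ev j * t))
        (fun j _ => by positivity) (Finset.mem_univ i)
    have hslope : 2 * ev i = α := eq_of_forall_mul_exp_le (by positivity) hle hf
    norm_cast
    linarith
  · rintro ⟨μ, hμ⟩
    exact ⟨_, _, log_norm_sq_exp_smul_apply_of_apply_eq_smul hμ hw⟩

theorem stmt_1
    (W : Type*) [NormedAddCommGroup W] [InnerProductSpace ℂ W]
    [FiniteDimensional ℂ W] [Nontrivial W]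
    (A : W →L[ℂ] W)
    (hA : ∀ x y : W, ⟪A x, y⟫ = ⟪x, A y⟫)
    (w : W) (hw : w ≠ 0) :
    (∃ α β : ℝ, ∀ t : ℝ,
        Real.log (‖(NormedSpace.exp (t • A)) w‖ ^ 2) = α * t + β) ↔
      ∃ μ : ℂ, A w = μ • w :=
  stmt_1_general W A hA w hw
end

section
/- Let W be a nonzero finite-dimensional complex inner product space, A a self-adjoint linear endomorphism of W, and w ∈ W a vector with Re⟪A w, w⟫ = 0. Then ‖exp(tA) w‖ ≥ ‖w‖ for every real t. -/
/-!
For self-adjoint `B`, `‖exp B x‖² = ⟪exp (2B) x, x⟫`, and the continuous functional calculus turns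
`1 + s ≤ eˢ` into the operator inequality `1 + 2B ≤ exp (2B)`. Hence
`‖exp (tA) w‖² ≥ ‖w‖² + 2t Re⟪A w, w⟫ = ‖w‖²`.
-/

open scoped ComplexInnerProductSpace

lemma IsSelfAdjoint.one_add_le_exp {A : Type*} [NormedRing A] [StarRing A] [NormedAlgebra ℝ A]
    [ContinuousFunctionalCalculus ℝ A IsSelfAdjoint] [PartialOrder A] [StarOrderedRing A]
    {a : A} (ha : IsSelfAdjoint a) : 1 + a ≤ NormedSpace.exp a := by
  rw [← CFC.real_exp_eq_normedSpace_exp ha]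
  calc 1 + a = cfc (fun x : ℝ => 1 + x) a := by
        rw [cfc_add .., cfc_const_one .., cfc_id' ..]
    _ ≤ cfc Real.exp a := cfc_mono fun x _ => by linarith [Real.add_one_le_exp x]

namespace ContinuousLinearMap

variable {𝕜 E : Type*} [RCLike 𝕜] [NormedAddCommGroup E] [InnerProductSpace 𝕜 E]

lemma re_inner_le_re_inner_of_le {S T : E →L[𝕜] E} (h : S ≤ T) (x : E) :
    RCLike.re (inner 𝕜 (S x) x) ≤ RCLike.re (inner 𝕜 (T x) x) := by
  simpa [inner_sub_left] using ((le_def S T).mp h).re_inner_nonneg_left x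

lemma sq_norm_exp_apply [CompleteSpace E] {B : E →L[𝕜] E} (hB : IsSelfAdjoint B) (x : E) :
    ‖NormedSpace.exp B x‖ ^ 2 = RCLike.re (inner 𝕜 (NormedSpace.exp (B + B) x) x) := by
  let +nondep : NormedAlgebra ℚ (E →L[𝕜] E) := .restrictScalars ℚ 𝕜 _
  rw [NormedSpace.exp_add_of_commute (Commute.refl B), mul_apply_eq_comp,
    ← adjoint_inner_right, hB.exp.adjoint_eq, inner_self_eq_norm_sq]

end ContinuousLinearMap

lemma IsSelfAdjoint.sq_norm_add_two_mul_re_inner_le_sq_norm_exp_apply {E : Type*}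
    [NormedAddCommGroup E] [InnerProductSpace ℂ E] [CompleteSpace E] {B : E →L[ℂ] E}
    (hB : IsSelfAdjoint B) (x : E) :
    ‖x‖ ^ 2 + 2 * ⟪B x, x⟫.re ≤ ‖NormedSpace.exp B x‖ ^ 2 := by
  rw [ContinuousLinearMap.sq_norm_exp_apply hB]
  calc ‖x‖ ^ 2 + 2 * ⟪B x, x⟫.re = RCLike.re ⟪(1 + (B + B)) x, x⟫ := by
        simp only [add_apply, one_apply_eq_self, inner_add_left, map_add, inner_self_eq_norm_sq,
          RCLike.re_to_complex]
        ring
    _ ≤ _ := ContinuousLinearMap.re_inner_le_re_inner_of_le (hB.add hB).one_add_le_exp x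

theorem stmt_3_general
    (W : Type*) [NormedAddCommGroup W] [InnerProductSpace ℂ W]
    [FiniteDimensional ℂ W]
    (A : W →L[ℂ] W)
    (hA : ∀ x y : W, ⟪A x, y⟫ = ⟪x, A y⟫)
    (w : W) (hw : (⟪A w, w⟫).re = 0) :
    ∀ t : ℝ, ‖(NormedSpace.exp (t • A)) w‖ ≥ ‖w‖ := by
  intro t
  have hA_selfAdjoint : IsSelfAdjoint A := ContinuousLinearMap.isSelfAdjoint_iff_isSymmetric.mpr hA
  have key := ((IsSelfAdjoint.all t).smul hA_selfAdjoint).sq_norm_add_two_mul_re_inner_le_sq_norm_exp_apply w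
  have hre : (⟪(t • A) w, w⟫).re = 0 := by simp [hw]
  rw [hre, mul_zero, add_zero] at key
  exact (pow_le_pow_iff_left₀ (norm_nonneg _) (norm_nonneg _) two_ne_zero).mp key

theorem stmt_3
    (W : Type*) [NormedAddCommGroup W] [InnerProductSpace ℂ W]
    [FiniteDimensional ℂ W] [Nontrivial W]
    (A : W →L[ℂ] W)
    (hA : ∀ x y : W, ⟪A x, y⟫ = ⟪x, A y⟫)
    (w : W) (hw : (⟪A w, w⟫).re = 0) :
    ∀ t : ℝ, ‖(NormedSpace.exp (t • A)) w‖ ≥ ‖w‖ :=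
  stmt_3_general W A hA w hw
end
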